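/- arXiv:0801.2801 — 5 statements merged into one kernel-verified Lean document; each statement's English description precedes it below -/
import Mathlib

section
/- For words of length 4 over the four-letter alphabet (ZMod 2) × (ZMod 2), the three pairwise intersections of feasible sets coincide: F⁰¹ ∩ F¹¹ = F¹⁰ ∩ F¹¹ = F⁰¹ ∩ F¹⁰, and each equals the triple intersection F⁰¹ ∩ F¹⁰ ∩ F¹¹. -/
set_option maxRecDepth 4000


/-- Generalized parity `pˣ` of `y ∈ (ZMod 2) × (ZMod 2)`:
`0` if `y ∈ {00, x}` and `1` otherwise. -/
def genParity (x y : ZMod 2 × ZMod 2) : ZMod 2 :=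
  if y = (0, 0) ∨ y = x then 0 else 1

/-- A length-4 word `w` is `x`-constant if `pˣ(w i)` takes the same value
for all `i`. -/
def IsXConstant (x : ZMod 2 × ZMod 2) (w : Fin 4 → ZMod 2 × ZMod 2) : Prop :=
  ∀ i j : Fin 4, genParity x (w i) = genParity x (w j)

/-- A length-4 word `w` is `x`-balanced if exactly 2 of the 4 indices `i`
satisfy `pˣ(w i) = 1`. -/
def IsXBalanced (x : ZMod 2 × ZMod 2) (w : Fin 4 → ZMod 2 × ZMod 2) : Prop :=
  (Finset.univ.filter fun i : Fin 4 => genParity x (w i) = 1).card = 2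

/-- The set `Fˣ` of `x`-feasible words of length 4: `x`-constant or `x`-balanced. -/
def feasible (x : ZMod 2 × ZMod 2) : Set (Fin 4 → ZMod 2 × ZMod 2) :=
  {w | IsXConstant x w ∨ IsXBalanced x w}

instance (x : ZMod 2 × ZMod 2) (w : Fin 4 → ZMod 2 × ZMod 2) :
    Decidable (IsXConstant x w) := by unfold IsXConstant; infer_instance

instance (x : ZMod 2 × ZMod 2) (w : Fin 4 → ZMod 2 × ZMod 2) :
    Decidable (IsXBalanced x w) := by unfold IsXBalanced; infer_instance

/-- For length-4 words the three pairwise intersections of feasible sets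
coincide, and each equals the triple intersection. -/
theorem feasible_pairwise_intersections_eq :
    feasible (0, 1) ∩ feasible (1, 1) = feasible (1, 0) ∩ feasible (1, 1)
    ∧ feasible (1, 0) ∩ feasible (1, 1) = feasible (0, 1) ∩ feasible (1, 0)
    ∧ feasible (0, 1) ∩ feasible (1, 1)
        = feasible (0, 1) ∩ feasible (1, 0) ∩ feasible (1, 1) := by
  refine ⟨Set.ext fun w => ?_, Set.ext fun w => ?_, Set.ext fun w => ?_⟩ <;>
    · simp only [feasible, Set.mem_inter_iff, Set.mem_setOf_eq]
      revert w
      decide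
end

section
/- A word w : Fin 4 → (ZMod 2) × (ZMod 2) is both 11-balanced and 01-balanced if and only if the multiset of its letters {w 0, w 1, w 2, w 3} is one of: {00, 01, 10, 11} (all distinct), {00, 00, 10, 10}, or {01, 01, 11, 11}. That is, B¹¹ ∩ B⁰¹ = [abcd] ∪ [aacc] ∪ [bbdd]. -/
/-- `B¹¹ ∩ B⁰¹ = [abcd] ∪ [aacc] ∪ [bbdd]`: a length-4 word is both
`11`-balanced and `01`-balanced iff its multiset of letters is
`{00,01,10,11}`, `{00,00,10,10}` or `{01,01,11,11}`. -/
theorem balanced11_inter_balanced01 (w : Fin 4 → ZMod 2 × ZMod 2) :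
    (IsXBalanced (1, 1) w ∧ IsXBalanced (0, 1) w) ↔
      ({w 0, w 1, w 2, w 3} : Multiset (ZMod 2 × ZMod 2))
          = {(0, 0), (0, 1), (1, 0), (1, 1)}
      ∨ ({w 0, w 1, w 2, w 3} : Multiset (ZMod 2 × ZMod 2))
          = {(0, 0), (0, 0), (1, 0), (1, 0)}
      ∨ ({w 0, w 1, w 2, w 3} : Multiset (ZMod 2 × ZMod 2))
          = {(0, 1), (0, 1), (1, 1), (1, 1)} := by
  have hw : w = ![w 0, w 1, w 2, w 3] := by
    funext i; fin_cases i <;> rfl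
  rw [hw]; clear hw
  generalize w 0 = a; generalize w 1 = b; generalize w 2 = c; generalize w 3 = d
  revert a b c d
  unfold IsXBalanced
  decide
end

section
/- For words w : Fin 4 → (ZMod 2) × (ZMod 2): w is 11-balanced and 01-constant if and only if the multiset of its letters is {00, 00, 01, 01} or {10, 10, 11, 11} (i.e. B¹¹ ∩ C⁰¹ = [aabb] ∪ [ccdd]); and w is both 11-constant and 01-constant if and only if all four letters of w are equal (i.e. C¹¹ ∩ C⁰¹ = [aaaa] ∪ [bbbb] ∪ [cccc] ∪ [dddd]). -/
/-- `B¹¹ ∩ C⁰¹ = [aabb] ∪ [ccdd]` and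
`C¹¹ ∩ C⁰¹ = [aaaa] ∪ [bbbb] ∪ [cccc] ∪ [dddd]`. -/
theorem balanced11_constant01_and_constant11_constant01
    (w : Fin 4 → ZMod 2 × ZMod 2) :
    ((IsXBalanced (1, 1) w ∧ IsXConstant (0, 1) w) ↔
      ({w 0, w 1, w 2, w 3} : Multiset (ZMod 2 × ZMod 2))
          = {(0, 0), (0, 0), (0, 1), (0, 1)}
      ∨ ({w 0, w 1, w 2, w 3} : Multiset (ZMod 2 × ZMod 2))
          = {(1, 0), (1, 0), (1, 1), (1, 1)})
    ∧
    ((IsXConstant (1, 1) w ∧ IsXConstant (0, 1) w) ↔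
      ∀ i j : Fin 4, w i = w j) := by
  have hw : w = ![w 0, w 1, w 2, w 3] := by
    funext i; fin_cases i <;> rfl
  rw [hw]
  generalize w 0 = a; generalize w 1 = b; generalize w 2 = c; generalize w 3 = d
  revert a b c d
  simp only [IsXBalanced, IsXConstant]
  decide
end

section
/- Every word of length 4 over the alphabet (ZMod 2) × (ZMod 2) is x-feasible for some nonzero x; that is, the set of all length-4 words equals F⁰¹ ∪ F¹⁰ ∪ F¹¹. -/
/-- Every length-4 word over `(ZMod 2) × (ZMod 2)` is `x`-feasible for some
nonzero `x`: the set of all words equals `F⁰¹ ∪ F¹⁰ ∪ F¹¹`. -/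
theorem univ_eq_union_feasible :
    (Set.univ : Set (Fin 4 → ZMod 2 × ZMod 2))
      = feasible (0, 1) ∪ feasible (1, 0) ∪ feasible (1, 1) := by
  ext w
  simp only [Set.mem_univ, Set.mem_union, feasible, Set.mem_setOf_eq, true_iff, IsXConstant, IsXBalanced]
  revert w
  set_option maxRecDepth 10000 in decide
end

section
/- Let F be the free group on two generators a, b (e.g. F = FreeGroup (Fin 2)). For any letters u, v ∈ (ZMod 2) × (ZMod 2), the product dec(u) * dec(v) lies in the union of cyclic subgroups Subgroup.zpowers a ∪ Subgroup.zpowers b if and only if p¹¹(u) = p¹¹(v), i.e. if and only if the length-2 word (u, v) is parity constant. (Thus, for words of length 2 over the paired alphabet, 11-parity constancy is equivalent to representing an element of ⟨a⟩ ∪ ⟨b⟩.) -/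
/-- Decoding of the paired alphabet `{a, b, B = b⁻¹, A = a⁻¹}` into the free
group on two generators: `dec 00 = a`, `dec 01 = b`, `dec 10 = b⁻¹`,
`dec 11 = a⁻¹`. -/
def dec (y : ZMod 2 × ZMod 2) : FreeGroup (Fin 2) :=
  if y = (0, 0) then FreeGroup.of 0
  else if y = (0, 1) then FreeGroup.of 1
  else if y = (1, 0) then (FreeGroup.of 1)⁻¹
  else (FreeGroup.of 0)⁻¹


lemma dec00 : dec (0,0) = FreeGroup.of 0 := rfl
lemma dec01 : dec (0,1) = FreeGroup.of 1 := rfl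
lemma dec10 : dec (1,0) = (FreeGroup.of 1)⁻¹ := rfl
lemma dec11 : dec (1,1) = (FreeGroup.of 0)⁻¹ := rfl

noncomputable def φ : FreeGroup (Fin 2) →* Multiplicative (ℤ × ℤ) :=
  FreeGroup.lift (fun i => Multiplicative.ofAdd (if i = 0 then ((1:ℤ),(0:ℤ)) else (0,1)))

lemma notin0 {x : FreeGroup (Fin 2)} (h : (Multiplicative.toAdd (φ x)).2 ≠ 0) :
    x ∉ Subgroup.zpowers (FreeGroup.of (0 : Fin 2)) := by
  intro hm; obtain ⟨n, rfl⟩ := hm; simp [φ] at h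

lemma notin1 {x : FreeGroup (Fin 2)} (h : (Multiplicative.toAdd (φ x)).1 ≠ 0) :
    x ∉ Subgroup.zpowers (FreeGroup.of (1 : Fin 2)) := by
  intro hm; obtain ⟨n, rfl⟩ := hm; simp [φ] at h

/-- For length-2 words over the paired alphabet, the element `dec u * dec v`
of the free group lies in `⟨a⟩ ∪ ⟨b⟩` iff the word `(u, v)` is `11`-parity
constant. -/
theorem mem_zpowers_union_iff_parity_constant (u v : ZMod 2 × ZMod 2) :
    dec u * dec v ∈
        (↑(Subgroup.zpowers (FreeGroup.of (0 : Fin 2)))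
          ∪ ↑(Subgroup.zpowers (FreeGroup.of (1 : Fin 2))) :
            Set (FreeGroup (Fin 2)))
      ↔ genParity (1, 1) u = genParity (1, 1) v := by
  have hz : ∀ z : ZMod 2 × ZMod 2, z = (0,0) ∨ z = (0,1) ∨ z = (1,0) ∨ z = (1,1) := by
    decide
  rcases hz u with rfl | rfl | rfl | rfl <;> rcases hz v with rfl | rfl | rfl | rfl <;>
    rw [Set.mem_union, SetLike.mem_coe, SetLike.mem_coe] <;>
    simp only [dec00, dec01, dec10, dec11] <;>
    first
      | (refine iff_of_false ?_ ?_ <;>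
          first
            | decide
            | (rw [not_or]; exact ⟨notin0 (by simp [φ]), notin1 (by simp [φ])⟩))
      | (refine iff_of_true (Or.inl (Subgroup.mem_zpowers_iff.mpr ⟨2, ?_⟩)) ?_ <;>
          first | decide | trivial | rw [zpow_two]) <;> done
      | (refine iff_of_true (Or.inl (Subgroup.mem_zpowers_iff.mpr ⟨0, ?_⟩)) ?_ <;>
          first | decide | trivial | rw [zpow_zero, mul_inv_cancel] | rw [zpow_zero, inv_mul_cancel]) <;> done
      | (refine iff_of_true (Or.inl (Subgroup.mem_zpowers_iff.mpr ⟨-2, ?_⟩)) ?_ <;>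
          first | decide | trivial | rw [zpow_neg, zpow_two, mul_inv_rev]) <;> done
      | (refine iff_of_true (Or.inr (Subgroup.mem_zpowers_iff.mpr ⟨2, ?_⟩)) ?_ <;>
          first | decide | trivial | rw [zpow_two]) <;> done
      | (refine iff_of_true (Or.inr (Subgroup.mem_zpowers_iff.mpr ⟨0, ?_⟩)) ?_ <;>
          first | decide | trivial | rw [zpow_zero, mul_inv_cancel] | rw [zpow_zero, inv_mul_cancel]) <;> done
      | (refine iff_of_true (Or.inr (Subgroup.mem_zpowers_iff.mpr ⟨-2, ?_⟩)) ?_ <;>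
          first | decide | trivial | rw [zpow_neg, zpow_two, mul_inv_rev]) <;> done
end
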